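/- arXiv:1303.0128 — 2 statements merged into one kernel-verified Lean document; each statement's English description precedes it below -/
import Mathlib

section
/- No local hidden variable theory can satisfy the modified Hardy conditions: the conditions P(∀i: u_i = 1) = q > 0, P(v_r ≠ d_r, u_{r+1} = 1) = 0 for every r (indices cyclic, n+1 ≡ 1), and P(∀i: v_i = d_i) = 0 are jointly inconsistent with any LHV model. -/
open Finset

/-!
Since `P(∀ i, u_i = 1) > 0`, some hidden state `ω` of positive weight gives every `u_i` outcome `1`
with positive probability. At such an `ω` the conditions `P(v_r ≠ d_r, u_{r+1} = 1) = 0` force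
every `v_r` to output `d_r` with certainty, so `P(∀ i, v_i = d_i) ≥ ρ ω > 0`.
-/

section WeightedSums

variable {ι : Type*} [Fintype ι] {ρ g : ι → ℝ}

lemma exists_pos_ne_zero_of_sum_mul_pos (hρ : ∀ i, 0 ≤ ρ i) (h : 0 < ∑ i, ρ i * g i) :
    ∃ i, 0 < ρ i ∧ g i ≠ 0 := by
  obtain ⟨i, -, hi⟩ : ∃ i ∈ univ, (0 : ℝ) < ρ i * g i :=
    exists_lt_of_sum_lt (by simpa using h)
  exact ⟨i, (hρ i).lt_of_ne fun h0 ↦ by simp [← h0] at hi, right_ne_zero_of_mul hi.ne'⟩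

lemma eq_zero_of_sum_mul_eq_zero (hρ : ∀ i, 0 ≤ ρ i) (hg : ∀ i, 0 ≤ g i)
    (h : ∑ i, ρ i * g i = 0) {i : ι} (hi : 0 < ρ i) : g i = 0 := by
  have hterm := (sum_eq_zero_iff_of_nonneg fun j _ ↦ mul_nonneg (hρ j) (hg j)).mp h i (mem_univ i)
  exact (mul_eq_zero.mp hterm).resolve_left hi.ne'

lemma eq_one_of_sum_eq_one_of_forall_ne_eq_zero (hg : ∑ i, g i = 1) (a : ι)
    (h : ∀ i, i ≠ a → g i = 0) : g a = 1 := by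
  rwa [sum_eq_single a (fun i _ hi ↦ h i hi) (fun ha ↦ absurd (mem_univ a) ha)] at hg

end WeightedSums

theorem statement1_general (n : ℕ) (hn : 0 < n) (d : Fin n → ℕ) (hd : ∀ i, 1 ≤ d i)
    (Ω : Type) [Fintype Ω] (ρ : Ω → ℝ)
    (f : (i : Fin n) → Bool → Ω → Fin (d i) → ℝ)
    (hρ0 : ∀ ω, 0 ≤ ρ ω)
    (hf0 : ∀ i b ω x, 0 ≤ f i b ω x)
    (hf1 : ∀ i b ω, ∑ x, f i b ω x = 1)
    (q : ℝ) (hq : 0 < q)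
    (h1 : ∑ ω, ρ ω * ∏ i, f i false ω ⟨0, hd i⟩ = q)
    (h2 : ∀ (r : Fin n) (v : Fin (d r)), v ≠ ⟨d r - 1, Nat.sub_lt (hd r) Nat.one_pos⟩ →
      ∑ ω, ρ ω * (f r true ω v *
        f ⟨(r.1 + 1) % n, Nat.mod_lt _ hn⟩ false ω ⟨0, hd ⟨(r.1 + 1) % n, Nat.mod_lt _ hn⟩⟩) = 0)
    (h3 : ∑ ω, ρ ω * ∏ i, f i true ω ⟨d i - 1, Nat.sub_lt (hd i) Nat.one_pos⟩ = 0) :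
    False := by
  obtain ⟨ω, hρω, hu⟩ := exists_pos_ne_zero_of_sum_mul_pos hρ0 (h1 ▸ hq)
  have hu_ne : ∀ i, f i false ω ⟨0, hd i⟩ ≠ 0 := fun i ↦ prod_ne_zero_iff.mp hu i (mem_univ i)
  have hv_other : ∀ r v, v ≠ ⟨d r - 1, Nat.sub_lt (hd r) Nat.one_pos⟩ → f r true ω v = 0 := by
    intro r v hv
    have hpair := eq_zero_of_sum_mul_eq_zero hρ0
      (fun _ ↦ mul_nonneg (hf0 _ _ _ _) (hf0 _ _ _ _)) (h2 r v hv) hρω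
    exact (mul_eq_zero.mp hpair).resolve_right (hu_ne _)
  have hv_last : ∀ r, f r true ω ⟨d r - 1, Nat.sub_lt (hd r) Nat.one_pos⟩ = 1 := fun r ↦
    eq_one_of_sum_eq_one_of_forall_ne_eq_zero (hf1 r true ω) _ (hv_other r)
  have hv_prod := eq_zero_of_sum_mul_eq_zero hρ0 (fun _ ↦ prod_nonneg fun i _ ↦ hf0 _ _ _ _) h3 hρω
  rw [prod_eq_one fun r _ ↦ hv_last r] at hv_prod
  exact one_ne_zero hv_prod

/-- No local hidden variable theory can satisfy the *modified*
Hardy conditions (2): `P(∀ i : u_i = 1) = q > 0`,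
`P(v_r ≠ d_r, u_{r+1} = 1) = 0` for every `r` (indices cyclic, `n + 1 ≡ 1`),
and `P(∀ i : v_i = d_i) = 0`.
Settings: `false` = `u_i`, `true` = `v_i`; outcomes of party `i` are `Fin (d i)`,
with outcome "1" being `⟨0, _⟩` and outcome "d_i" being `⟨d i - 1, _⟩`.
The two-party marginal `P(v_r ≠ d_r, u_{r+1} = 1)` in an LHV model is
`∑ ω, ρ ω * f r true ω v * f (r+1) false ω 1` for each `v ≠ d_r`. -/
theorem statement1 (n : ℕ) (hn : 0 < n) (d : Fin n → ℕ) (hd : ∀ i, 1 ≤ d i)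
    (Ω : Type) [Fintype Ω] (ρ : Ω → ℝ)
    (f : (i : Fin n) → Bool → Ω → Fin (d i) → ℝ)
    (hρ0 : ∀ ω, 0 ≤ ρ ω) (hρ1 : ∑ ω, ρ ω = 1)
    (hf0 : ∀ i b ω x, 0 ≤ f i b ω x)
    (hf1 : ∀ i b ω, ∑ x, f i b ω x = 1)
    (q : ℝ) (hq : 0 < q)
    (h1 : ∑ ω, ρ ω * ∏ i, f i false ω ⟨0, hd i⟩ = q)
    (h2 : ∀ (r : Fin n) (v : Fin (d r)), v ≠ ⟨d r - 1, Nat.sub_lt (hd r) Nat.one_pos⟩ →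
      ∑ ω, ρ ω * (f r true ω v *
        f ⟨(r.1 + 1) % n, Nat.mod_lt _ hn⟩ false ω ⟨0, hd ⟨(r.1 + 1) % n, Nat.mod_lt _ hn⟩⟩) = 0)
    (h3 : ∑ ω, ρ ω * ∏ i, f i true ω ⟨d i - 1, Nat.sub_lt (hd i) Nat.one_pos⟩ = 0) :
    False :=
  statement1_general n hn d hd Ω ρ f hρ0 hf0 hf1 q hq h1 h2 h3
end

section
/- For the 3-qubit modified Hardy conditions with observables as above, the unique (up to phase) unit vector |ψ⟩ orthogonal to span{|φ_0⟩,...,|φ_6⟩} satisfies |⟨ψ|φ_7⟩|² = |α_1α_2α_3|²|β_1β_2β_3|² / (1 − |α_1α_2α_3|²). -/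
/-- The product state `|a⟩|b⟩|c⟩` of three qubits, as an element of `(ℂ²)^⊗3`
modeled by `EuclideanSpace ℂ (Fin 2 × Fin 2 × Fin 2)`. -/
noncomputable def prod3 (a b c : EuclideanSpace ℂ (Fin 2)) :
    EuclideanSpace ℂ (Fin 2 × Fin 2 × Fin 2) :=
  (WithLp.equiv 2 _).symm (fun p => a p.1 * b p.2.1 * c p.2.2)

/-!
Write `u j` for the rotated basis `(α v₀ + β v₁, β̄ v₀ - ᾱ v₁)` of qubit `j`. The vector
`ψ₀ = u₀₁ ⊗ u₁₁ ⊗ u₂₁ + conj (α₀ α₁ α₂) • v₀₁ ⊗ v₁₁ ⊗ v₂₁` is orthogonal to the seven states: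
its first term is killed by every state with a factor `u j 0`, its second by every state with a
factor `v j 0`, and on `φ₀ = v₀₁ ⊗ v₁₁ ⊗ v₂₁` the two contributions cancel. Its squared norm is
`1 - |α₀ α₁ α₂|²` and its overlap with `φ₇ = u₀₀ ⊗ u₁₀ ⊗ u₂₀` is `conj (α₀ α₁ α₂ β₀ β₁ β₂)`,
which gives the Hardy probability after normalising.

For uniqueness, the pairs `(φ₁, φ₂)`, `(φ₃, φ₄)`, `(φ₅, φ₆)` each span a whole slot `ℂ²`, so a
vector orthogonal to the seven states has coordinates `c i j k` in the product basis of the `v j`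
satisfying `ᾱ c + β̄ c' = 0` along one edge of the cube `{0,1}³` at a time. As every `β j ≠ 0`,
these relations propagate `c 0 0 0 = 0` to all coordinates but `c 1 1 1`, which vanishes by `φ₀`.
-/

open ComplexConjugate
open scoped InnerProductSpace

lemma eq_inner_div_smul_of_forall_inner_eq_zero {𝕜 E ι : Type*} [RCLike 𝕜]
    [NormedAddCommGroup E] [InnerProductSpace 𝕜 E] {φ : ι → E} {e ψ x : E}
    (hψ : ∀ i, ⟪φ i, ψ⟫_𝕜 = 0) (he : ⟪e, ψ⟫_𝕜 ≠ 0)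
    (hsep : ∀ y, (∀ i, ⟪φ i, y⟫_𝕜 = 0) → ⟪e, y⟫_𝕜 = 0 → y = 0) (hx : ∀ i, ⟪φ i, x⟫_𝕜 = 0) :
    x = (⟪e, x⟫_𝕜 / ⟪e, ψ⟫_𝕜) • ψ := by
  refine sub_eq_zero.mp (hsep _ (fun i => ?_) ?_)
  · rw [inner_sub_right, inner_smul_right, hx, hψ, mul_zero, sub_zero]
  · rw [inner_sub_right, inner_smul_right, div_mul_cancel₀ _ he, sub_self]

lemma norm_inner_inv_norm_smul_sq {𝕜 E : Type*} [RCLike 𝕜] [NormedAddCommGroup E]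
    [InnerProductSpace 𝕜 E] (x z : E) :
    ‖⟪(‖x‖⁻¹ : 𝕜) • x, z⟫_𝕜‖ ^ 2 = ‖⟪z, x⟫_𝕜‖ ^ 2 / ‖x‖ ^ 2 := by
  rw [inner_smul_left, norm_mul, RCLike.norm_conj, norm_inv, RCLike.norm_ofReal, abs_norm,
    norm_inner_symm, mul_pow, inv_pow, inv_mul_eq_div]

section Qubit

variable {E : Type*} [NormedAddCommGroup E] [InnerProductSpace ℂ E]

def rotatedBasis (v : Fin 2 → E) (α β : ℂ) : Fin 2 → E :=
  ![α • v 0 + β • v 1, conj β • v 0 - conj α • v 1]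

variable {v : Fin 2 → E} {α β : ℂ}

lemma rotatedBasis_zero : rotatedBasis v α β 0 = α • v 0 + β • v 1 := rfl

lemma rotatedBasis_one : rotatedBasis v α β 1 = conj β • v 0 - conj α • v 1 := rfl

lemma mul_conj_add_mul_conj_eq_one (h : ‖α‖ ^ 2 + ‖β‖ ^ 2 = 1) :
    α * conj α + β * conj β = 1 := by
  simp only [Complex.mul_conj, Complex.normSq_eq_norm_sq]
  exact_mod_cast h

lemma self_zero_eq_rotatedBasis (h : ‖α‖ ^ 2 + ‖β‖ ^ 2 = 1) :
    v 0 = conj α • rotatedBasis v α β 0 + β • rotatedBasis v α β 1 := by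
  simp only [rotatedBasis_zero, rotatedBasis_one]
  linear_combination (norm := module) (-mul_conj_add_mul_conj_eq_one h) • v 0

lemma self_one_eq_rotatedBasis (h : ‖α‖ ^ 2 + ‖β‖ ^ 2 = 1) :
    v 1 = conj β • rotatedBasis v α β 0 - α • rotatedBasis v α β 1 := by
  simp only [rotatedBasis_zero, rotatedBasis_one]
  linear_combination (norm := module) (-mul_conj_add_mul_conj_eq_one h) • v 1

lemma inner_rotatedBasis_zero_one (hv : Orthonormal ℂ v) :
    ⟪rotatedBasis v α β 0, rotatedBasis v α β 1⟫_ℂ = 0 := by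
  simp only [rotatedBasis_zero, rotatedBasis_one, inner_add_left, inner_sub_right,
    inner_smul_left, inner_smul_right, orthonormal_iff_ite.mp hv]
  norm_num
  ring

lemma inner_rotatedBasis_one_one (hv : Orthonormal ℂ v) (h : ‖α‖ ^ 2 + ‖β‖ ^ 2 = 1) :
    ⟪rotatedBasis v α β 1, rotatedBasis v α β 1⟫_ℂ = 1 := by
  simp only [rotatedBasis_one, inner_sub_left, inner_sub_right, inner_smul_left,
    inner_smul_right, orthonormal_iff_ite.mp hv]
  norm_num
  linear_combination mul_conj_add_mul_conj_eq_one h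

lemma inner_rotatedBasis_one_self_one (hv : Orthonormal ℂ v) :
    ⟪rotatedBasis v α β 1, v 1⟫_ℂ = -α := by
  simp only [rotatedBasis_one, inner_sub_left, inner_smul_left, orthonormal_iff_ite.mp hv]
  norm_num

lemma inner_self_zero_rotatedBasis_one (hv : Orthonormal ℂ v) :
    ⟪v 0, rotatedBasis v α β 1⟫_ℂ = conj β := by
  simp only [rotatedBasis_one, inner_sub_right, inner_smul_right, orthonormal_iff_ite.mp hv]
  norm_num

lemma inner_self_one_rotatedBasis_one (hv : Orthonormal ℂ v) :
    ⟪v 1, rotatedBasis v α β 1⟫_ℂ = -conj α := by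
  simp only [rotatedBasis_one, inner_sub_right, inner_smul_right, orthonormal_iff_ite.mp hv]
  norm_num

lemma inner_rotatedBasis_zero_self_one (hv : Orthonormal ℂ v) :
    ⟪rotatedBasis v α β 0, v 1⟫_ℂ = conj β := by
  simp only [rotatedBasis_zero, inner_add_left, inner_smul_left, orthonormal_iff_ite.mp hv]
  norm_num

end Qubit

section Prod3

variable {a b c a' b' c' : EuclideanSpace ℂ (Fin 2)} {s : ℂ}

lemma prod3_apply (a b c : EuclideanSpace ℂ (Fin 2)) (p : Fin 2 × Fin 2 × Fin 2) :
    prod3 a b c p = a p.1 * b p.2.1 * c p.2.2 := rfl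

lemma inner_prod3 : ⟪prod3 a b c, prod3 a' b' c'⟫_ℂ = ⟪a, a'⟫_ℂ * ⟪b, b'⟫_ℂ * ⟪c, c'⟫_ℂ := by
  simp only [prod3, PiLp.inner_apply, WithLp.equiv_symm_apply,
    RCLike.inner_apply, Fintype.sum_prod_type, Fin.sum_univ_two, map_mul]
  ring

lemma prod3_add_left : prod3 (a + a') b c = prod3 a b c + prod3 a' b c := by
  ext p; simp only [prod3_apply, PiLp.add_apply]; ring

lemma prod3_sub_left : prod3 (a - a') b c = prod3 a b c - prod3 a' b c := by
  ext p; simp only [prod3_apply, PiLp.sub_apply]; ring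

lemma prod3_smul_left : prod3 (s • a) b c = s • prod3 a b c := by
  ext p; simp only [prod3_apply, PiLp.smul_apply, smul_eq_mul]; ring

lemma prod3_add_middle : prod3 a (b + b') c = prod3 a b c + prod3 a b' c := by
  ext p; simp only [prod3_apply, PiLp.add_apply]; ring

lemma prod3_sub_middle : prod3 a (b - b') c = prod3 a b c - prod3 a b' c := by
  ext p; simp only [prod3_apply, PiLp.sub_apply]; ring

lemma prod3_smul_middle : prod3 a (s • b) c = s • prod3 a b c := by
  ext p; simp only [prod3_apply, PiLp.smul_apply, smul_eq_mul]; ring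

lemma prod3_add_right : prod3 a b (c + c') = prod3 a b c + prod3 a b c' := by
  ext p; simp only [prod3_apply, PiLp.add_apply]; ring

lemma prod3_sub_right : prod3 a b (c - c') = prod3 a b c - prod3 a b c' := by
  ext p; simp only [prod3_apply, PiLp.sub_apply]; ring

lemma prod3_smul_right : prod3 a b (s • c) = s • prod3 a b c := by
  ext p; simp only [prod3_apply, PiLp.smul_apply, smul_eq_mul]; ring

lemma orthonormal_prod3 {e f g : Fin 2 → EuclideanSpace ℂ (Fin 2)} (he : Orthonormal ℂ e)
    (hf : Orthonormal ℂ f) (hg : Orthonormal ℂ g) :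
    Orthonormal ℂ fun p : Fin 2 × Fin 2 × Fin 2 => prod3 (e p.1) (f p.2.1) (g p.2.2) := by
  rw [orthonormal_iff_ite]
  rintro ⟨i, j, k⟩ ⟨i', j', k'⟩
  simp only [inner_prod3, orthonormal_iff_ite.mp he, orthonormal_iff_ite.mp hf,
    orthonormal_iff_ite.mp hg, Prod.mk.injEq]
  split_ifs <;> simp_all

lemma eq_zero_of_forall_inner_prod3_eq_zero {e f g : Fin 2 → EuclideanSpace ℂ (Fin 2)}
    (he : Orthonormal ℂ e) (hf : Orthonormal ℂ f) (hg : Orthonormal ℂ g)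
    {y : EuclideanSpace ℂ (Fin 2 × Fin 2 × Fin 2)}
    (h : ∀ i j k, ⟪prod3 (e i) (f j) (g k), y⟫_ℂ = 0) : y = 0 :=
  InnerProductSpace.ext_inner_left_basis
    (basisOfOrthonormalOfCardEqFinrank (orthonormal_prod3 he hf hg) (by simp))
    fun p => by simpa using h p.1 p.2.1 p.2.2

end Prod3

section RotatedSlots

variable {w : Fin 2 → EuclideanSpace ℂ (Fin 2)} {α β : ℂ} {a b c : EuclideanSpace ℂ (Fin 2)}
  {y : EuclideanSpace ℂ (Fin 2 × Fin 2 × Fin 2)}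

lemma inner_prod3_left_eq_zero_of_rotatedBasis (h : ‖α‖ ^ 2 + ‖β‖ ^ 2 = 1)
    (h0 : ⟪prod3 (rotatedBasis w α β 0) b c, y⟫_ℂ = 0)
    (h1 : ⟪prod3 (rotatedBasis w α β 1) b c, y⟫_ℂ = 0) (i : Fin 2) :
    ⟪prod3 (w i) b c, y⟫_ℂ = 0 := by
  fin_cases i
  · rw [Fin.zero_eta, self_zero_eq_rotatedBasis (v := w) h]
    simp only [prod3_add_left, prod3_smul_left, inner_add_left, inner_smul_left, h0,
      h1, mul_zero, add_zero]
  · rw [Fin.mk_one, self_one_eq_rotatedBasis (v := w) h]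
    simp only [prod3_sub_left, prod3_smul_left, inner_sub_left, inner_smul_left, h0,
      h1, mul_zero, sub_zero]

lemma inner_prod3_middle_eq_zero_of_rotatedBasis (h : ‖α‖ ^ 2 + ‖β‖ ^ 2 = 1)
    (h0 : ⟪prod3 a (rotatedBasis w α β 0) c, y⟫_ℂ = 0)
    (h1 : ⟪prod3 a (rotatedBasis w α β 1) c, y⟫_ℂ = 0) (j : Fin 2) :
    ⟪prod3 a (w j) c, y⟫_ℂ = 0 := by
  fin_cases j
  · rw [Fin.zero_eta, self_zero_eq_rotatedBasis (v := w) h]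
    simp only [prod3_add_middle, prod3_smul_middle, inner_add_left, inner_smul_left, h0,
      h1, mul_zero, add_zero]
  · rw [Fin.mk_one, self_one_eq_rotatedBasis (v := w) h]
    simp only [prod3_sub_middle, prod3_smul_middle, inner_sub_left, inner_smul_left, h0,
      h1, mul_zero, sub_zero]

lemma inner_prod3_right_eq_zero_of_rotatedBasis (h : ‖α‖ ^ 2 + ‖β‖ ^ 2 = 1)
    (h0 : ⟪prod3 a b (rotatedBasis w α β 0), y⟫_ℂ = 0)
    (h1 : ⟪prod3 a b (rotatedBasis w α β 1), y⟫_ℂ = 0) (k : Fin 2) :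
    ⟪prod3 a b (w k), y⟫_ℂ = 0 := by
  fin_cases k
  · rw [Fin.zero_eta, self_zero_eq_rotatedBasis (v := w) h]
    simp only [prod3_add_right, prod3_smul_right, inner_add_left, inner_smul_left, h0,
      h1, mul_zero, add_zero]
  · rw [Fin.mk_one, self_one_eq_rotatedBasis (v := w) h]
    simp only [prod3_sub_right, prod3_smul_right, inner_sub_left, inner_smul_left, h0,
      h1, mul_zero, sub_zero]

end RotatedSlots

section Hardy

variable {v u : Fin 3 → Fin 2 → EuclideanSpace ℂ (Fin 2)} {α β : Fin 3 → ℂ}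

noncomputable def hardyFamily (v u : Fin 3 → Fin 2 → EuclideanSpace ℂ (Fin 2)) :
    Fin 7 → EuclideanSpace ℂ (Fin 2 × Fin 2 × Fin 2) :=
  ![prod3 (v 0 1) (v 1 1) (v 2 1),
    prod3 (v 0 0) (u 1 0) (u 2 0),
    prod3 (v 0 0) (u 1 0) (u 2 1),
    prod3 (u 0 0) (v 1 0) (u 2 0),
    prod3 (u 0 1) (v 1 0) (u 2 0),
    prod3 (u 0 0) (u 1 0) (v 2 0),
    prod3 (u 0 0) (u 1 1) (v 2 0)]

noncomputable def hardyVector (v u : Fin 3 → Fin 2 → EuclideanSpace ℂ (Fin 2)) (α : Fin 3 → ℂ) :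
    EuclideanSpace ℂ (Fin 2 × Fin 2 × Fin 2) :=
  prod3 (u 0 1) (u 1 1) (u 2 1) + conj (α 0 * α 1 * α 2) • prod3 (v 0 1) (v 1 1) (v 2 1)

lemma inner_hardyFamily_hardyVector (hv : ∀ j, Orthonormal ℂ (v j))
    (hu : ∀ j, u j = rotatedBasis (v j) (α j) (β j)) (i : Fin 7) :
    ⟪hardyFamily v u i, hardyVector v u α⟫_ℂ = 0 := by
  have hvv (j) : ⟪v j 0, v j 1⟫_ℂ = 0 := (hv j).2 (by decide)
  have hv1 (j) : ⟪v j 1, v j 1⟫_ℂ = 1 := by simp [(hv j).1]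
  have huu (j) : ⟪u j 0, u j 1⟫_ℂ = 0 := hu j ▸ inner_rotatedBasis_zero_one (hv j)
  have hvu (j) : ⟪v j 1, u j 1⟫_ℂ = -conj (α j) := hu j ▸ inner_self_one_rotatedBasis_one (hv j)
  fin_cases i <;>
    simp only [hardyFamily, hardyVector, Fin.reduceFinMk, Matrix.cons_val, inner_add_right,
      inner_smul_right, inner_prod3, hvv, hv1, huu, hvu, mul_zero, zero_mul, add_zero, map_mul]
  ring

lemma inner_prod3_zero_hardyVector (hv : ∀ j, Orthonormal ℂ (v j))
    (hu : ∀ j, u j = rotatedBasis (v j) (α j) (β j)) :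
    ⟪prod3 (v 0 0) (v 1 0) (v 2 0), hardyVector v u α⟫_ℂ = conj (β 0 * β 1 * β 2) := by
  have hvv (j) : ⟪v j 0, v j 1⟫_ℂ = 0 := (hv j).2 (by decide)
  have hvu (j) : ⟪v j 0, u j 1⟫_ℂ = conj (β j) := hu j ▸ inner_self_zero_rotatedBasis_one (hv j)
  simp only [hardyVector, inner_add_right, inner_smul_right, inner_prod3, hvv, hvu, map_mul]
  ring

lemma inner_prod3_rotatedBasis_hardyVector (hv : ∀ j, Orthonormal ℂ (v j))
    (hu : ∀ j, u j = rotatedBasis (v j) (α j) (β j)) :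
    ⟪prod3 (u 0 0) (u 1 0) (u 2 0), hardyVector v u α⟫_ℂ =
      conj (α 0 * α 1 * α 2) * conj (β 0 * β 1 * β 2) := by
  have huu (j) : ⟪u j 0, u j 1⟫_ℂ = 0 := hu j ▸ inner_rotatedBasis_zero_one (hv j)
  have huv (j) : ⟪u j 0, v j 1⟫_ℂ = conj (β j) := hu j ▸ inner_rotatedBasis_zero_self_one (hv j)
  simp only [hardyVector, inner_add_right, inner_smul_right, inner_prod3, huu, huv, map_mul]
  ring

lemma norm_hardyVector_sq (hv : ∀ j, Orthonormal ℂ (v j))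
    (hu : ∀ j, u j = rotatedBasis (v j) (α j) (β j)) (hnorm : ∀ j, ‖α j‖ ^ 2 + ‖β j‖ ^ 2 = 1) :
    ‖hardyVector v u α‖ ^ 2 = 1 - (‖α 0‖ * ‖α 1‖ * ‖α 2‖) ^ 2 := by
  have hv1 (j) : ⟪v j 1, v j 1⟫_ℂ = 1 := by simp [(hv j).1]
  have hu1 (j) : ⟪u j 1, u j 1⟫_ℂ = 1 := hu j ▸ inner_rotatedBasis_one_one (hv j) (hnorm j)
  have hvu (j) : ⟪v j 1, u j 1⟫_ℂ = -conj (α j) := hu j ▸ inner_self_one_rotatedBasis_one (hv j)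
  have huv (j) : ⟪u j 1, v j 1⟫_ℂ = -α j := hu j ▸ inner_rotatedBasis_one_self_one (hv j)
  have key : ⟪hardyVector v u α, hardyVector v u α⟫_ℂ =
      ((1 - (‖α 0‖ * ‖α 1‖ * ‖α 2‖) ^ 2 : ℝ) : ℂ) := by
    simp only [hardyVector, inner_add_left, inner_add_right, inner_smul_left, inner_smul_right,
      inner_prod3, hv1, hu1, hvu, huv, map_mul, Complex.conj_conj]
    push_cast
    simp only [mul_pow, ← Complex.mul_conj']
    ring
  rw [← inner_self_eq_norm_sq (𝕜 := ℂ), key]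
  exact Complex.ofReal_re _

lemma hardyVector_ne_zero (hv : ∀ j, Orthonormal ℂ (v j))
    (hu : ∀ j, u j = rotatedBasis (v j) (α j) (β j)) (hnorm : ∀ j, ‖α j‖ ^ 2 + ‖β j‖ ^ 2 = 1)
    (hβ : ∀ j, β j ≠ 0) : hardyVector v u α ≠ 0 := by
  have hα (j) : ‖α j‖ < 1 := by
    nlinarith [hnorm j, norm_pos_iff.mpr (hβ j), norm_nonneg (α j)]
  have hprod : ‖α 0‖ * ‖α 1‖ * ‖α 2‖ < 1 :=
    mul_lt_one_of_nonneg_of_lt_one_left (by positivity)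
      (mul_lt_one_of_nonneg_of_lt_one_left (norm_nonneg _) (hα 0) (hα 1).le) (hα 2).le
  intro h
  have h_sq := norm_hardyVector_sq hv hu hnorm
  rw [h, norm_zero] at h_sq
  linarith [pow_lt_one₀ (by positivity) hprod two_ne_zero]

lemma eq_zero_of_inner_hardyFamily_eq_zero (hv : ∀ j, Orthonormal ℂ (v j))
    (hu : ∀ j, u j = rotatedBasis (v j) (α j) (β j)) (hnorm : ∀ j, ‖α j‖ ^ 2 + ‖β j‖ ^ 2 = 1)
    (hβ : ∀ j, β j ≠ 0) {y : EuclideanSpace ℂ (Fin 2 × Fin 2 × Fin 2)}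
    (hy : ∀ i, ⟪hardyFamily v u i, y⟫_ℂ = 0) (h000 : ⟪prod3 (v 0 0) (v 1 0) (v 2 0), y⟫_ℂ = 0) :
    y = 0 := by
  set c : Fin 2 → Fin 2 → Fin 2 → ℂ := fun i j k => ⟪prod3 (v 0 i) (v 1 j) (v 2 k), y⟫_ℂ
  have hrot (j) : u j 0 = α j • v j 0 + β j • v j 1 := by rw [hu j, rotatedBasis_zero]
  have hB (k) : conj (α 1) * c 0 0 k + conj (β 1) * c 0 1 k = 0 := by
    have h := inner_prod3_right_eq_zero_of_rotatedBasis (hnorm 2)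
      (by rw [← hu 2]; exact hy 1) (by rw [← hu 2]; exact hy 2) k
    rwa [hrot, prod3_add_middle, prod3_smul_middle, prod3_smul_middle, inner_add_left,
      inner_smul_left, inner_smul_left] at h
  have hC (i) : conj (α 2) * c i 0 0 + conj (β 2) * c i 0 1 = 0 := by
    have h := inner_prod3_left_eq_zero_of_rotatedBasis (hnorm 0)
      (by rw [← hu 0]; exact hy 3) (by rw [← hu 0]; exact hy 4) i
    rwa [hrot, prod3_add_right, prod3_smul_right, prod3_smul_right, inner_add_left,
      inner_smul_left, inner_smul_left] at h
  have hD (j) : conj (α 0) * c 0 j 0 + conj (β 0) * c 1 j 0 = 0 := by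
    have h := inner_prod3_middle_eq_zero_of_rotatedBasis (hnorm 1)
      (by rw [← hu 1]; exact hy 5) (by rw [← hu 1]; exact hy 6) j
    rwa [hrot, prod3_add_left, prod3_smul_left, prod3_smul_left, inner_add_left,
      inner_smul_left, inner_smul_left] at h
  have propagate {a b x x' : ℂ} (hb : b ≠ 0) (h : conj a * x + conj b * x' = 0) (hx : x = 0) :
      x' = 0 := by
    simpa [hx, hb] using h
  have h010 := propagate (hβ 1) (hB 0) h000
  have h001 := propagate (hβ 2) (hC 0) h000
  have h100 := propagate (hβ 0) (hD 0) h000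
  have h011 := propagate (hβ 1) (hB 1) h001
  have h101 := propagate (hβ 2) (hC 1) h100
  have h110 := propagate (hβ 0) (hD 1) h010
  have h111 : c 1 1 1 = 0 := hy 0
  refine eq_zero_of_forall_inner_prod3_eq_zero (hv 0) (hv 1) (hv 2) fun i j k => ?_
  change c i j k = 0
  fin_cases i <;> fin_cases j <;> fin_cases k <;> assumption

end Hardy

theorem statement8_general (v u : Fin 3 → Fin 2 → EuclideanSpace ℂ (Fin 2))
    (hv : ∀ j, Orthonormal ℂ (v j))
    (α β : Fin 3 → ℂ)
    (hnorm : ∀ j, ‖α j‖ ^ 2 + ‖β j‖ ^ 2 = 1)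
    (hβ : ∀ j, 0 < ‖β j‖ ∧ ‖β j‖ < 1)
    (hu0 : ∀ j, u j 0 = α j • v j 0 + β j • v j 1)
    (hu1 : ∀ j, u j 1 = (starRingEnd ℂ) (β j) • v j 0 - (starRingEnd ℂ) (α j) • v j 1) :
    ∃ ψ : EuclideanSpace ℂ (Fin 2 × Fin 2 × Fin 2), ‖ψ‖ = 1 ∧
      (∀ i : Fin 7,
        (inner ℂ (![prod3 (v 0 1) (v 1 1) (v 2 1),
            prod3 (v 0 0) (u 1 0) (u 2 0),
            prod3 (v 0 0) (u 1 0) (u 2 1),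
            prod3 (u 0 0) (v 1 0) (u 2 0),
            prod3 (u 0 1) (v 1 0) (u 2 0),
            prod3 (u 0 0) (u 1 0) (v 2 0),
            prod3 (u 0 0) (u 1 1) (v 2 0)] i) ψ : ℂ) = 0) ∧
      (∀ ψ' : EuclideanSpace ℂ (Fin 2 × Fin 2 × Fin 2), ‖ψ'‖ = 1 →
        (∀ i : Fin 7,
          (inner ℂ (![prod3 (v 0 1) (v 1 1) (v 2 1),
              prod3 (v 0 0) (u 1 0) (u 2 0),
              prod3 (v 0 0) (u 1 0) (u 2 1),
              prod3 (u 0 0) (v 1 0) (u 2 0),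
              prod3 (u 0 1) (v 1 0) (u 2 0),
              prod3 (u 0 0) (u 1 0) (v 2 0),
              prod3 (u 0 0) (u 1 1) (v 2 0)] i) ψ' : ℂ) = 0) →
        ∃ c : ℂ, ‖c‖ = 1 ∧ ψ' = c • ψ) ∧
      ‖(inner ℂ ψ (prod3 (u 0 0) (u 1 0) (u 2 0)) : ℂ)‖ ^ 2 =
        (‖α 0‖ * ‖α 1‖ * ‖α 2‖) ^ 2 * (‖β 0‖ * ‖β 1‖ * ‖β 2‖) ^ 2 /
          (1 - (‖α 0‖ * ‖α 1‖ * ‖α 2‖) ^ 2) := by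
  have hu (j) : u j = rotatedBasis (v j) (α j) (β j) := by
    ext1 i; fin_cases i; exacts [hu0 j, hu1 j]
  have hβ0 (j) : β j ≠ 0 := norm_pos_iff.mp (hβ j).1
  set ψ₀ := hardyVector v u α
  have hψ₀ : ψ₀ ≠ 0 := hardyVector_ne_zero hv hu hnorm hβ0
  set ψ : EuclideanSpace ℂ (Fin 2 × Fin 2 × Fin 2) := (‖ψ₀‖⁻¹ : ℂ) • ψ₀
  have hψ : ‖ψ‖ = 1 := norm_smul_inv_norm hψ₀
  have horth (i) : ⟪hardyFamily v u i, ψ⟫_ℂ = 0 := by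
    rw [inner_smul_right, inner_hardyFamily_hardyVector hv hu, mul_zero]
  refine ⟨ψ, hψ, horth, fun ψ' hψ' hψ'_orth => ?_, ?_⟩
  · have he : ⟪prod3 (v 0 0) (v 1 0) (v 2 0), ψ⟫_ℂ ≠ 0 := by
      rw [inner_smul_right, inner_prod3_zero_hardyVector hv hu]
      simp [hβ0, hψ₀]
    have h := eq_inner_div_smul_of_forall_inner_eq_zero horth he
      (fun y hy h0 => eq_zero_of_inner_hardyFamily_eq_zero hv hu hnorm hβ0 hy h0) hψ'_orth
    refine ⟨_, ?_, h⟩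
    rwa [h, norm_smul, hψ, mul_one] at hψ'
  · calc ‖⟪ψ, prod3 (u 0 0) (u 1 0) (u 2 0)⟫_ℂ‖ ^ 2
          = ‖⟪prod3 (u 0 0) (u 1 0) (u 2 0), ψ₀⟫_ℂ‖ ^ 2 / ‖ψ₀‖ ^ 2 :=
            norm_inner_inv_norm_smul_sq ψ₀ _
        _ = _ := by
            rw [inner_prod3_rotatedBasis_hardyVector hv hu, norm_hardyVector_sq hv hu hnorm]
            simp only [norm_mul, Complex.norm_conj]
            ring

/-- For the 3-qubit modified Hardy conditions, the unique
(up to a phase) unit vector `|ψ⟩` orthogonal to `span{|φ_0⟩, …, |φ_6⟩}` satisfies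
`|⟨ψ|φ_7⟩|² = |α_1 α_2 α_3|² |β_1 β_2 β_3|² / (1 − |α_1 α_2 α_3|²)`. -/
theorem statement8 (v u : Fin 3 → Fin 2 → EuclideanSpace ℂ (Fin 2))
    (hv : ∀ j, Orthonormal ℂ (v j))
    (α β : Fin 3 → ℂ)
    (hnorm : ∀ j, ‖α j‖ ^ 2 + ‖β j‖ ^ 2 = 1)
    (hα : ∀ j, 0 < ‖α j‖ ∧ ‖α j‖ < 1)
    (hβ : ∀ j, 0 < ‖β j‖ ∧ ‖β j‖ < 1)
    (hu0 : ∀ j, u j 0 = α j • v j 0 + β j • v j 1)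
    (hu1 : ∀ j, u j 1 = (starRingEnd ℂ) (β j) • v j 0 - (starRingEnd ℂ) (α j) • v j 1) :
    ∃ ψ : EuclideanSpace ℂ (Fin 2 × Fin 2 × Fin 2), ‖ψ‖ = 1 ∧
      (∀ i : Fin 7,
        (inner ℂ (![prod3 (v 0 1) (v 1 1) (v 2 1),
            prod3 (v 0 0) (u 1 0) (u 2 0),
            prod3 (v 0 0) (u 1 0) (u 2 1),
            prod3 (u 0 0) (v 1 0) (u 2 0),
            prod3 (u 0 1) (v 1 0) (u 2 0),
            prod3 (u 0 0) (u 1 0) (v 2 0),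
            prod3 (u 0 0) (u 1 1) (v 2 0)] i) ψ : ℂ) = 0) ∧
      (∀ ψ' : EuclideanSpace ℂ (Fin 2 × Fin 2 × Fin 2), ‖ψ'‖ = 1 →
        (∀ i : Fin 7,
          (inner ℂ (![prod3 (v 0 1) (v 1 1) (v 2 1),
              prod3 (v 0 0) (u 1 0) (u 2 0),
              prod3 (v 0 0) (u 1 0) (u 2 1),
              prod3 (u 0 0) (v 1 0) (u 2 0),
              prod3 (u 0 1) (v 1 0) (u 2 0),
              prod3 (u 0 0) (u 1 0) (v 2 0),
              prod3 (u 0 0) (u 1 1) (v 2 0)] i) ψ' : ℂ) = 0) →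
        ∃ c : ℂ, ‖c‖ = 1 ∧ ψ' = c • ψ) ∧
      ‖(inner ℂ ψ (prod3 (u 0 0) (u 1 0) (u 2 0)) : ℂ)‖ ^ 2 =
        (‖α 0‖ * ‖α 1‖ * ‖α 2‖) ^ 2 * (‖β 0‖ * ‖β 1‖ * ‖β 2‖) ^ 2 /
          (1 - (‖α 0‖ * ‖α 1‖ * ‖α 2‖) ^ 2) :=
  statement8_general v u hv α β hnorm hβ hu0 hu1
end
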